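/- Let g : F_p → Z_{p^k} be any function and define h : F_p × F_p → Z_{p^k} by h(z_1, z_2) = p^{k−1} z_1 z_2 + g(z_2). Then h is generalized bent, and its Walsh transform is W_h(b_1, b_2) = p · ζ_{p^k}^{−p^{k−1} b_1 b_2 + g(b_1)} for all (b_1, b_2) ∈ F_p × F_p. -/

import Mathlib

open Finset

/-- `chr m z = ζ_m ^ z`, the additive character sending `z ∈ ℤ/m` to `e^{2πi z/m}`. -/
noncomputable def chr (m : ℕ) (z : ZMod m) : ℂ :=
  Complex.exp (2 * Real.pi * Complex.I * (z.val : ℂ) / (m : ℂ))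

/-- The Walsh transform of a generalized p-ary function `f : V_n → ℤ_{p^k}`,
where `V_n = (ℤ/p)^n` with the usual dot product. -/
noncomputable def walsh (p k n : ℕ) [NeZero p] [NeZero (p ^ k)]
    (f : (Fin n → ZMod p) → ZMod (p ^ k)) (a : Fin n → ZMod p) : ℂ :=
  ∑ x : Fin n → ZMod p, chr (p ^ k) (f x) * chr p (-(∑ i, a i * x i))

/-- `ξ = 1` if `p ≡ 1 (mod 4)` or `n` even, `ξ = √-1` otherwise. -/
noncomputable def xi (p n : ℕ) : ℂ :=
  if p % 4 = 1 ∨ Even n then 1 else Complex.I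

/-- The lift `ℤ/p → ℤ/p^k`, `z ↦ p^{k-1} z`. -/
def lift (p k : ℕ) (z : ZMod p) : ZMod (p ^ k) :=
  (p ^ (k - 1) : ZMod (p ^ k)) * (z.val : ZMod (p ^ k))

/-- Walsh transform of a function on `F_p × F_p` with values in `ℤ_{p^k}`. -/
noncomputable def walsh2 (p k : ℕ) [NeZero p] [NeZero (p ^ k)]
    (f : ZMod p → ZMod p → ZMod (p ^ k)) (b₁ b₂ : ZMod p) : ℂ :=
  ∑ z₁ : ZMod p, ∑ z₂ : ZMod p, chr (p ^ k) (f z₁ z₂) * chr p (-(b₁ * z₁ + b₂ * z₂))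

/-! Multiplying by `p^{k-1}` embeds `ℤ/p` into `ℤ/p^k` so that `ζ_{p^k}^{p^{k-1} z} = ζ_p^z`; hence
the `z₁`-sum in `W_h(b₁, b₂)` is the character sum `∑_{z₁} ζ_p^{z₁ (z₂ - b₁)}`, which is `p` for
`z₂ = b₁` and vanishes otherwise, leaving the single term `p ζ_{p^k}^{g(b₁)} ζ_p^{-b₁ b₂}`. -/

lemma chr_eq_stdAddChar (m : ℕ) [NeZero m] : chr m = ZMod.stdAddChar := by
  funext z
  rw [chr, ZMod.stdAddChar_apply, ZMod.toCircle_apply]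

lemma chr_add (m : ℕ) [NeZero m] (a b : ZMod m) : chr m (a + b) = chr m a * chr m b := by
  rw [chr_eq_stdAddChar, AddChar.map_add_eq_mul]

lemma chr_neg (m : ℕ) [NeZero m] (a : ZMod m) : chr m (-a) = (chr m a)⁻¹ := by
  rw [chr_eq_stdAddChar, AddChar.map_neg_eq_inv]

lemma norm_chr (m : ℕ) (z : ZMod m) : ‖chr m z‖ = 1 := by
  rw [chr, show 2 * (Real.pi : ℂ) * Complex.I * (z.val : ℂ) / (m : ℂ)
      = ((2 * Real.pi * z.val / m : ℝ) : ℂ) * Complex.I by push_cast; ring]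
  exact Complex.norm_exp_ofReal_mul_I _

lemma sum_chr_mul (m : ℕ) [NeZero m] (b : ZMod m) :
    ∑ x : ZMod m, chr m (x * b) = if b = 0 then (m : ℂ) else 0 := by
  classical
  rw [chr_eq_stdAddChar, AddChar.sum_mulShift b (ZMod.isPrimitive_stdAddChar m), ZMod.card,
    Nat.cast_ite, Nat.cast_zero]

lemma chr_natCast (m : ℕ) [NeZero m] (j : ℕ) :
    chr m j = Complex.exp (2 * Real.pi * Complex.I * j / m) := by
  rw [chr_eq_stdAddChar, ZMod.stdAddChar_apply, ZMod.toCircle_natCast]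

lemma chr_natCast_mul_natCast {d n : ℕ} [NeZero d] [NeZero n] (j : ℕ) :
    chr (d * n) ((d : ZMod (d * n)) * j) = chr n j := by
  have hd : (d : ℂ) ≠ 0 := Nat.cast_ne_zero.2 (NeZero.ne d)
  rw [← Nat.cast_mul, chr_natCast, chr_natCast]
  congr 1
  push_cast
  field_simp

lemma chr_lift (p k : ℕ) [NeZero p] (hk : 1 ≤ k) (z : ZMod p) :
    chr (p ^ k) (lift p k z) = chr p z := by
  obtain ⟨k, rfl⟩ := Nat.exists_eq_add_of_le' hk
  have h := chr_natCast_mul_natCast (d := p ^ k) (n := p) z.val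
  rw [ZMod.natCast_zmod_val, ← pow_succ] at h
  rwa [lift, Nat.add_sub_cancel, ← Nat.cast_pow]

lemma walsh2_lift_mul_add (p k : ℕ) [NeZero p] (hk : 1 ≤ k)
    (g : ZMod p → ZMod (p ^ k)) (b₁ b₂ : ZMod p) :
    walsh2 p k (fun z₁ z₂ => lift p k (z₁ * z₂) + g z₂) b₁ b₂ =
      (p : ℂ) * chr (p ^ k) (-(lift p k (b₁ * b₂)) + g b₁) := by
  have hterm : ∀ z₁ z₂ : ZMod p,
      chr (p ^ k) (lift p k (z₁ * z₂) + g z₂) * chr p (-(b₁ * z₁ + b₂ * z₂)) =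
        chr p (z₁ * (z₂ - b₁)) * (chr (p ^ k) (g z₂) * chr p (-(b₂ * z₂))) := by
    intro z₁ z₂
    rw [chr_add, chr_lift p k hk, show z₁ * (z₂ - b₁) = z₁ * z₂ + -(b₁ * z₁) by ring, neg_add,
      chr_add, chr_add]
    ring
  simp only [walsh2, hterm]
  rw [Finset.sum_comm]
  simp only [← Finset.sum_mul, sum_chr_mul, sub_eq_zero, ite_mul, zero_mul, Finset.sum_ite_eq',
    Finset.mem_univ, if_true]
  rw [chr_add, chr_neg (p ^ k), chr_lift p k hk, chr_neg, mul_comm b₁ b₂]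
  ring

theorem stmt_7_general (p k : ℕ) [NeZero p] [NeZero (p ^ k)]
    (hk : 1 ≤ k) (g : ZMod p → ZMod (p ^ k)) (b₁ b₂ : ZMod p) :
    ‖walsh2 p k (fun z₁ z₂ => lift p k (z₁ * z₂) + g z₂) b₁ b₂‖ = p ∧
    walsh2 p k (fun z₁ z₂ => lift p k (z₁ * z₂) + g z₂) b₁ b₂ =
      (p : ℂ) * chr (p ^ k) (-(lift p k (b₁ * b₂)) + g b₁) := by
  have hW := walsh2_lift_mul_add p k hk g b₁ b₂
  exact ⟨by rw [hW, norm_mul, norm_chr, mul_one, Complex.norm_natCast], hW⟩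

theorem stmt_7 (p k : ℕ) [NeZero p] [NeZero (p ^ k)] (hp : p.Prime) (hodd : Odd p)
    (hk : 1 ≤ k) (g : ZMod p → ZMod (p ^ k)) (b₁ b₂ : ZMod p) :
    ‖walsh2 p k (fun z₁ z₂ => lift p k (z₁ * z₂) + g z₂) b₁ b₂‖ = p ∧
    walsh2 p k (fun z₁ z₂ => lift p k (z₁ * z₂) + g z₂) b₁ b₂ =
      (p : ℂ) * chr (p ^ k) (-(lift p k (b₁ * b₂)) + g b₁) :=
  stmt_7_general p k hk g b₁ b₂
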